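/- Scale equivariance of the vector-covariance simplified Kalman filter (vSKF) rating recursion. Let M ≥ 1, let Y be a type of game outcomes, let g, h : ℝ → Y → ℝ with h(z, y) ≥ 0 for all z, y, and let sequences x_t ∈ ℝ^M with entries x_{t,m} ∈ {−1, 0, 1}, β_t ∈ ℝ, y_t ∈ Y be given. For parameters s > 0, v₀ > 0, ε_t ≥ 0, define: μ₀(s, v₀, ε) = 0 ∈ ℝ^M, v₀-vector v_0(s, v₀, ε) = v₀·𝟏 ∈ ℝ^M, and for t ≥ 1: v̄_t = β_t² v_{t-1} + ε_t 𝟏 (componentwise), ω_t = Σ_{m=1}^M x_{t,m}² v̄_{t,m}, g_t = g(β_t x_tᵀ μ_{t-1} / s, y_t), h_t = h(β_t x_tᵀ μ_{t-1} / s, y_t), μ_t = β_t μ_{t-1} + (v̄_t ⊙ x_t) · s g_t / (s² + h_t ω_t), v_t = v̄_t ⊙ ( 𝟏 − v̄_t ⊙ |x_t| · h_t / (s² + h_t ω_t) ), where ⊙ is componentwise multiplication and |x_t| is the componentwise absolute value. Then for every s > 0 and every t ≥ 0 one has μ_t(s, s² v₀, (s² ε_t)_t) = s · μ_t(1, v₀,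 (ε_t)_t) and v_t(s, s² v₀, (s² ε_t)_t) = s² · v_t(1, v₀, (ε_t)_t). -/

import Mathlib

open Matrix

noncomputable def vSKF {M : ℕ} {Y : Type} (g h : ℝ → Y → ℝ)
    (x : ℕ → Fin M → ℝ) (β : ℕ → ℝ) (y : ℕ → Y)
    (s v₀ : ℝ) (ε : ℕ → ℝ) :
    ℕ → (Fin M → ℝ) × (Fin M → ℝ)
  | 0 => (0, fun _ => v₀)
  | (t + 1) =>
    let μp := (vSKF g h x β y s v₀ ε t).1
    let vp := (vSKF g h x β y s v₀ ε t).2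
    let vb : Fin M → ℝ := fun m => (β (t + 1)) ^ 2 * vp m + ε (t + 1)
    let ω := ∑ m, (x (t + 1) m) ^ 2 * vb m
    let gt := g (β (t + 1) * (x (t + 1) ⬝ᵥ μp) / s) (y (t + 1))
    let ht := h (β (t + 1) * (x (t + 1) ⬝ᵥ μp) / s) (y (t + 1))
    (fun m => β (t + 1) * μp m + vb m * x (t + 1) m * (s * gt / (s ^ 2 + ht * ω)),
     fun m => vb m * (1 - vb m * |x (t + 1) m| * (ht / (s ^ 2 + ht * ω))))

lemma vSKF_var_nonneg {M : ℕ} {Y : Type} (g h : ℝ → Y → ℝ)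
    (hh : ∀ z y, 0 ≤ h z y)
    (x : ℕ → Fin M → ℝ)
    (hx : ∀ t m, x t m = -1 ∨ x t m = 0 ∨ x t m = 1)
    (β : ℕ → ℝ) (y : ℕ → Y)
    (s v₀ : ℝ) (hs : 0 < s) (hv₀ : 0 ≤ v₀)
    (ε : ℕ → ℝ) (hε : ∀ t, 0 ≤ ε t) :
    ∀ t m, 0 ≤ (vSKF g h x β y s v₀ ε t).2 m := by
  intro t
  induction t with
  | zero => intro m; simpa [vSKF] using hv₀
  | succ t ih =>
    intro m
    simp only [vSKF]
    set vp := (vSKF g h x β y s v₀ ε t).2 with hvp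
    set vb : Fin M → ℝ := fun m => (β (t + 1)) ^ 2 * vp m + ε (t + 1) with hvb
    have hvbnn : ∀ m, 0 ≤ vb m := fun m => by
      have h1 := ih m
      have h2 := hε (t + 1)
      positivity
    set ω := ∑ m, (x (t + 1) m) ^ 2 * vb m with hω
    have hωnn : 0 ≤ ω := Finset.sum_nonneg fun i _ => by
      have := hvbnn i; positivity
    set ht := h (β (t + 1) * (x (t + 1) ⬝ᵥ (vSKF g h x β y s v₀ ε t).1) / s) (y (t + 1)) with hht
    have hhtnn : 0 ≤ ht := hh _ _
    have hden : 0 < s ^ 2 + ht * ω := by positivity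
    have hxsq : ∀ m, (x (t+1) m) ^ 2 = |x (t+1) m| := fun m => by
      rcases hx (t+1) m with h1 | h1 | h1 <;> simp [h1]
    have hle : vb m * |x (t + 1) m| ≤ ω := by
      rw [hω]
      have := Finset.single_le_sum (f := fun i => (x (t+1) i) ^ 2 * vb i)
        (fun i _ => by have := hvbnn i; positivity) (Finset.mem_univ m)
      calc vb m * |x (t+1) m| = (x (t+1) m) ^ 2 * vb m := by rw [hxsq]; ring
        _ ≤ _ := this
    have key : vb m * |x (t + 1) m| * (ht / (s ^ 2 + ht * ω)) ≤ 1 := by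
      rw [mul_div_assoc', div_le_one hden]
      nlinarith [mul_le_mul_of_nonneg_right hle hhtnn, sq_nonneg s]
    have : 0 ≤ 1 - vb m * |x (t + 1) m| * (ht / (s ^ 2 + ht * ω)) := by linarith
    exact mul_nonneg (hvbnn m) this

/-- Scale equivariance of the vSKF rating recursion. -/
theorem vSKF_scale_equivariant {M : ℕ} (hM : 1 ≤ M) {Y : Type} (g h : ℝ → Y → ℝ)
    (hh : ∀ z y, 0 ≤ h z y)
    (x : ℕ → Fin M → ℝ)
    (hx : ∀ t m, x t m = -1 ∨ x t m = 0 ∨ x t m = 1)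
    (β : ℕ → ℝ) (y : ℕ → Y)
    (s v₀ : ℝ) (hs : 0 < s) (hv₀ : 0 < v₀)
    (ε : ℕ → ℝ) (hε : ∀ t, 0 ≤ ε t) :
    ∀ t : ℕ,
      (vSKF g h x β y s (s ^ 2 * v₀) (fun u => s ^ 2 * ε u) t).1
          = s • (vSKF g h x β y 1 v₀ ε t).1 ∧
        (vSKF g h x β y s (s ^ 2 * v₀) (fun u => s ^ 2 * ε u) t).2
          = s ^ 2 • (vSKF g h x β y 1 v₀ ε t).2 := by
  intro t
  induction t with
  | zero => constructor <;> funext m <;> simp [vSKF]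
  | succ t ih =>
    obtain ⟨ihμ, ihv⟩ := ih
    have hs' : s ≠ 0 := ne_of_gt hs
    set μ1 := (vSKF g h x β y 1 v₀ ε t).1 with hμ1
    set v1 := (vSKF g h x β y 1 v₀ ε t).2 with hv1
    have hv1nn : ∀ m, 0 ≤ v1 m :=
      vSKF_var_nonneg g h hh x hx β y 1 v₀ one_pos hv₀.le ε hε t
    have harg : β (t + 1) * (x (t + 1) ⬝ᵥ (s • μ1)) / s
        = β (t + 1) * (x (t + 1) ⬝ᵥ μ1) / 1 := by
      rw [dotProduct_smul, smul_eq_mul]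
      field_simp
    set gt := g (β (t + 1) * (x (t + 1) ⬝ᵥ μ1) / 1) (y (t + 1)) with hgt
    set ht := h (β (t + 1) * (x (t + 1) ⬝ᵥ μ1) / 1) (y (t + 1)) with hht
    have hhtnn : 0 ≤ ht := hh _ _
    set ω1 := ∑ m, (x (t + 1) m) ^ 2 * ((β (t + 1)) ^ 2 * v1 m + ε (t + 1)) with hω1
    have hω1nn : 0 ≤ ω1 := Finset.sum_nonneg fun i _ => by
      have h1 := hv1nn i; have h2 := hε (t+1); positivity
    have hωs : (∑ m, (x (t + 1) m) ^ 2 * ((β (t + 1)) ^ 2 * (s ^ 2 * v1 m) + s ^ 2 * ε (t + 1)))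
        = s ^ 2 * ω1 := by
      rw [hω1, Finset.mul_sum]
      exact Finset.sum_congr rfl fun i _ => by ring
    have hD1 : (1:ℝ) ^ 2 + ht * ω1 ≠ 0 := by positivity
    have hDs : s ^ 2 + ht * (s ^ 2 * ω1) ≠ 0 := by positivity
    constructor
    · funext m
      simp only [vSKF, ihμ, ihv, Pi.smul_apply, smul_eq_mul, harg, ← hμ1, ← hv1, ← hω1, ← hgt, ← hht, hωs]
      field_simp
    · funext m
      simp only [vSKF, ihμ, ihv, Pi.smul_apply, smul_eq_mul, harg, ← hμ1, ← hv1, ← hω1, ← hgt, ← hht, hωs]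
      field_simp
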